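/- Correctness of the greedy solution to the interval inner problem: let S be a finite set, V : S → ℝ, and P̌, P̂ : S → [0,1] with P̌(s) ≤ P̂(s) for all s and ∑_s P̌(s) ≤ 1 ≤ ∑_s P̂(s). Order S as s₁,…,s_m with V(s₁) ≤ ⋯ ≤ V(s_m). Define p* by greedily assigning p*(s_i) = P̂(s_i) for i < j, p*(s_j) = P̌(s_j) + (1 − ∑_{i<j} P̂(s_i) − ∑_{i>j} P̌(s_i)) for the unique threshold index j, and p*(s_i) = P̌(s_i) for i > j. Then p* lies in the interval uncertainty set U = {p ∈ Δ(S) | P̌ ≤ p ≤ P̂} and minimizes ∑_s p(s)·V(s) over U. -/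
import Mathlib


/-- Correctness of the greedy solution to the interval inner problem: the greedy
distribution `pstar` lies in the interval uncertainty set and minimizes the expected
value `∑ s, p s * V s` over it. -/
theorem greedy_inner_problem_correct (m : ℕ) (S : Type*) [Fintype S]
    (V Pc Ph : S → ℝ)
    (hPc : ∀ s, Pc s ∈ Set.Icc (0:ℝ) 1) (hPh : ∀ s, Ph s ∈ Set.Icc (0:ℝ) 1)
    (hle : ∀ s, Pc s ≤ Ph s)
    (hsumlo : ∑ s, Pc s ≤ 1) (hsumhi : 1 ≤ ∑ s, Ph s)
    (e : Fin m ≃ S)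
    (hsorted : ∀ i j : Fin m, i ≤ j → V (e i) ≤ V (e j))
    (j : Fin m)
    (hthresh₁ : ∑ i ∈ Finset.univ.filter (· < j), Ph (e i)
        + ∑ i ∈ Finset.univ.filter (j ≤ ·), Pc (e i) ≤ 1)
    (hthresh₂ : 1 ≤ ∑ i ∈ Finset.univ.filter (· ≤ j), Ph (e i)
        + ∑ i ∈ Finset.univ.filter (j < ·), Pc (e i))
    (pstar : S → ℝ)
    (hpstar : ∀ s : S,
      pstar s =
        if e.symm s < j then Ph s
        else if e.symm s = j then
          Pc s + (1 - ∑ i ∈ Finset.univ.filter (· < j), Ph (e i)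
                    - ∑ i ∈ Finset.univ.filter (j ≤ ·), Pc (e i))
        else Pc s) :
    (pstar ∈ stdSimplex ℝ S ∧ ∀ s, Pc s ≤ pstar s ∧ pstar s ≤ Ph s) ∧
    (∀ p : S → ℝ, p ∈ stdSimplex ℝ S → (∀ s, Pc s ≤ p s ∧ p s ≤ Ph s) →
      ∑ s, pstar s * V s ≤ ∑ s, p s * V s) := by
  classical
  set A := ∑ i ∈ Finset.univ.filter (· < j), Ph (e i) with hA
  set B := ∑ i ∈ Finset.univ.filter (j ≤ ·), Pc (e i) with hB
  set δ := 1 - A - B with hδ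
  have hδ0 : 0 ≤ δ := by simp [hδ]; linarith [hthresh₁]
  -- splitting lemmas
  have hfle : (Finset.univ.filter (· ≤ j) : Finset (Fin m))
      = insert j (Finset.univ.filter (· < j)) := by
    ext i; simp [le_iff_lt_or_eq, or_comm]
  have hfge : (Finset.univ.filter (j ≤ ·) : Finset (Fin m))
      = insert j (Finset.univ.filter (j < ·)) := by
    ext i; simp [le_iff_lt_or_eq, eq_comm, or_comm]
  have hjnotlt : j ∉ Finset.univ.filter (· < j) := by simp
  have hjnotgt : j ∉ Finset.univ.filter (j < ·) := by simp
  have hBsplit : B = Pc (e j) + ∑ i ∈ Finset.univ.filter (j < ·), Pc (e i) := by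
    rw [hB, hfge, Finset.sum_insert hjnotgt]
  have hlesplit : ∑ i ∈ Finset.univ.filter (· ≤ j), Ph (e i) = Ph (e j) + A := by
    rw [hfle, Finset.sum_insert hjnotlt, hA]
  have hδ1 : δ ≤ Ph (e j) - Pc (e j) := by
    have := hthresh₂
    rw [hlesplit] at this
    have hB' := hBsplit
    simp only [hδ]; linarith
  -- value of pstar at e i
  have hps : ∀ i : Fin m, pstar (e i)
      = if i < j then Ph (e i) else if i = j then Pc (e i) + δ else Pc (e i) := by
    intro i
    rw [hpstar (e i)]
    simp [hδ, hA, hB]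
  -- pointwise bounds
  have hbounds : ∀ s, Pc s ≤ pstar s ∧ pstar s ≤ Ph s := by
    intro s
    have := hps (e.symm s)
    rw [e.apply_symm_apply] at this
    rw [this]
    rcases lt_trichotomy (e.symm s) j with h | h | h
    · rw [if_pos h]; exact ⟨hle s, le_rfl⟩
    · rw [if_neg (by simp [h]), if_pos h]
      have hd := hδ1
      rw [← h, e.apply_symm_apply] at hd
      exact ⟨by linarith, by linarith⟩
    · rw [if_neg (not_lt.mpr h.le), if_neg h.ne']
      exact ⟨le_rfl, hle s⟩
  have hnonneg : ∀ s, 0 ≤ pstar s := fun s => le_trans (hPc s).1 (hbounds s).1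
  -- total sum of pstar
  have hsum : ∑ s, pstar s = 1 := by
    rw [← Equiv.sum_comp e pstar]
    have : ∑ i, pstar (e i)
        = ∑ i ∈ Finset.univ.filter (· < j), pstar (e i)
          + ∑ i ∈ Finset.univ.filter (¬ · < j), pstar (e i) :=
      (Finset.sum_filter_add_sum_filter_not _ _ _).symm
    rw [this]
    have hnot : (Finset.univ.filter (¬ · < j) : Finset (Fin m))
        = Finset.univ.filter (j ≤ ·) := by ext i; simp [not_lt]
    rw [hnot, hfge, Finset.sum_insert hjnotgt]
    have h1 : ∑ i ∈ Finset.univ.filter (· < j), pstar (e i) = A := by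
      rw [hA]; apply Finset.sum_congr rfl
      intro i hi
      rw [hps i]
      simp at hi
      simp [hi]
    have h2 : pstar (e j) = Pc (e j) + δ := by rw [hps j]; simp
    have h3 : ∑ i ∈ Finset.univ.filter (j < ·), pstar (e i)
        = ∑ i ∈ Finset.univ.filter (j < ·), Pc (e i) := by
      apply Finset.sum_congr rfl
      intro i hi
      rw [hps i]
      simp at hi
      simp [not_lt.mpr hi.le, hi.ne']
    rw [h1, h2, h3]
    have := hBsplit
    simp [hδ]; linarith
  have hmem : pstar ∈ stdSimplex ℝ S := ⟨hnonneg, hsum⟩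
  refine ⟨⟨hmem, hbounds⟩, ?_⟩
  intro p hp hpb
  -- exchange argument
  have hdsum : ∑ i, (p (e i) - pstar (e i)) = 0 := by
    rw [Finset.sum_sub_distrib, Equiv.sum_comp e p, Equiv.sum_comp e pstar,
      hp.2, hsum]
    ring
  have key : 0 ≤ ∑ i, (p (e i) - pstar (e i)) * (V (e i) - V (e j)) := by
    apply Finset.sum_nonneg
    intro i _
    rcases lt_trichotomy i j with h | h | h
    · have h1 : p (e i) - pstar (e i) ≤ 0 := by
        rw [hps i]; simp [h]; linarith [(hpb (e i)).2]
      have h2 : V (e i) - V (e j) ≤ 0 := by linarith [hsorted i j h.le]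
      nlinarith [h1, h2]
    · simp [h]
    · have h1 : 0 ≤ p (e i) - pstar (e i) := by
        rw [hps i]
        simp [not_lt.mpr h.le, h.ne']
        linarith [(hpb (e i)).1]
      have h2 : 0 ≤ V (e i) - V (e j) := by linarith [hsorted j i h.le]
      exact mul_nonneg h1 h2
  have expand : ∑ i, (p (e i) - pstar (e i)) * (V (e i) - V (e j))
      = ∑ s, p s * V s - ∑ s, pstar s * V s - V (e j) * ∑ i, (p (e i) - pstar (e i)) := by
    rw [← Equiv.sum_comp e (fun s => p s * V s), ← Equiv.sum_comp e (fun s => pstar s * V s),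
      Finset.mul_sum, ← Finset.sum_sub_distrib, ← Finset.sum_sub_distrib]
    apply Finset.sum_congr rfl
    intro i _
    ring
  rw [expand, hdsum] at key
  linarith
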